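/- Let H be a spectral measure on Δ_{p−1} (finite Borel measure with ∫ v_j dH = 1 for each j), so H(Δ_{p−1}) = p. For each integer m ≥ 1 there exists a discrete spectral measure H_m supported on the grid V_{p,m} = {v ∈ Δ_{p−1} : m·v_j ∈ ℤ for all j} such that the associated Pickands dependence functions A and A_m satisfy sup_{w ∈ Δ_{p−1}} |A_m(w) − A(w)| ≤ p²/m. -/

import Mathlib

/-!
Round each `v ∈ Δ_{p-1}` to the grid by flooring its partial sums at scale `1/m`: every
coordinate moves by less than `1/m` and the coordinates still sum to `1`. The push-forward of `H`
then has moments in `[1 - p/m, 1 + p/m]`; scaling it by `m/(m+p)` and adding point masses at the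
vertices restores the unit moments exactly. Finally `A_G(w) = 1 - ∫ (∑ⱼ vⱼwⱼ - maxⱼ vⱼwⱼ) dG`
for every spectral measure `G`, and this integrand vanishes at the vertices and moves by at most
`1/m` under the rounding, so `|A_m(w) - A(w)| ≤ p/(m+p) + (p-1)/(m+p) ≤ p²/m`.
-/

open MeasureTheory

/-- The unit simplex `Δ_{p-1}` in `ℝ^p`. -/
def simplex (p : ℕ) : Set (Fin p → ℝ) :=
  {v | (∀ i, 0 ≤ v i ∧ v i ≤ 1) ∧ ∑ i, v i = 1}

/-- The Pickands dependence function of a measure `G` on the simplex. -/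
noncomputable def pickandsFn {p : ℕ} (G : Measure (Fin p → ℝ)) (w : Fin p → ℝ) : ℝ :=
  ∫ v, ⨆ j, v j * w j ∂G

open Finset

section SumSubSup

variable {ι : Type*} [Fintype ι]

lemma iSup_le_sum_of_nonneg {x : ι → ℝ} (hx : 0 ≤ x) : ⨆ j, x j ≤ ∑ j, x j :=
  Real.iSup_le (fun j => single_le_sum (fun i _ => hx i) (mem_univ j)) (sum_nonneg fun i _ => hx i)

lemma sum_le_card_mul_iSup [Nonempty ι] (x : ι → ℝ) : ∑ j, x j ≤ Fintype.card ι * ⨆ j, x j := by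
  simpa using sum_le_card_nsmul univ x _ fun j _ => le_ciSup (Set.finite_range x).bddAbove j

lemma sum_sub_iSup_sub_sum_sub_iSup_le [Nonempty ι] (x y : ι → ℝ) :
    (∑ j, x j - ⨆ j, x j) - (∑ j, y j - ⨆ j, y j) ≤ ∑ j, |x j - y j| := by
  classical
  obtain ⟨k, hk⟩ := exists_eq_ciSup_of_finite (f := y)
  have hxk : x k ≤ ⨆ j, x j := le_ciSup (Set.finite_range x).bddAbove k
  have hrest : ∑ j ∈ univ.erase k, (x j - y j) ≤ ∑ j ∈ univ.erase k, |x j - y j| :=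
    sum_le_sum fun j _ => le_abs_self _
  have hsplit := add_sum_erase univ (fun j => x j - y j) (mem_univ k)
  have hsplit' := add_sum_erase univ (fun j => |x j - y j|) (mem_univ k)
  have hdiff := sum_sub_distrib (s := univ) (f := x) (g := y)
  linarith [abs_nonneg (x k - y k)]

lemma abs_sum_sub_iSup_sub_sum_sub_iSup_le [Nonempty ι] (x y : ι → ℝ) :
    |(∑ j, x j - ⨆ j, x j) - (∑ j, y j - ⨆ j, y j)| ≤ ∑ j, |x j - y j| := by
  refine abs_le.2 ⟨?_, sum_sub_iSup_sub_sum_sub_iSup_le x y⟩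
  have := sum_sub_iSup_sub_sum_sub_iSup_le y x
  simp only [abs_sub_comm (y _)] at this
  linarith

end SumSubSup

section Simplex

variable {p : ℕ}

lemma mem_simplex_of_nonneg {v : Fin p → ℝ} (hv : 0 ≤ v) (hsum : ∑ j, v j = 1) :
    v ∈ simplex p :=
  ⟨fun i => ⟨hv i, hsum ▸ single_le_sum (fun j _ => hv j) (mem_univ i)⟩, hsum⟩

lemma pos_of_mem_simplex {w : Fin p → ℝ} (hw : w ∈ simplex p) : 0 < p := by
  rcases Nat.eq_zero_or_pos p with rfl | hp
  · simp [simplex] at hw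
  · exact hp

lemma abs_le_one_of_mem_simplex {v : Fin p → ℝ} (hv : v ∈ simplex p) (j : Fin p) :
    |v j| ≤ 1 :=
  abs_le.2 ⟨by linarith [(hv.1 j).1], (hv.1 j).2⟩

lemma sum_mul_le_one {v w : Fin p → ℝ} (hv : v ∈ simplex p) (hw : w ∈ simplex p) :
    ∑ j, v j * w j ≤ 1 :=
  hv.2 ▸ sum_le_sum fun j _ => mul_le_of_le_one_right (hv.1 j).1 (hw.1 j).2

end Simplex

section GridRound

variable {p : ℕ}

/-- `cumSum v k = v 0 + ⋯ + v (k - 1)`, with `v` extended by zero past `p`. -/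
noncomputable def cumSum (v : Fin p → ℝ) (k : ℕ) : ℝ :=
  ∑ i ∈ range k, if h : i < p then v ⟨i, h⟩ else 0

lemma cumSum_zero (v : Fin p → ℝ) : cumSum v 0 = 0 := by simp [cumSum]

lemma cumSum_succ (v : Fin p → ℝ) (j : Fin p) : cumSum v (j + 1) = cumSum v j + v j := by
  simp [cumSum, sum_range_succ]

lemma cumSum_self (v : Fin p → ℝ) : cumSum v p = ∑ j, v j := by
  rw [cumSum, ← Fin.sum_univ_eq_sum_range]
  simp

lemma measurable_cumSum (k : ℕ) : Measurable fun v : Fin p → ℝ => cumSum v k := by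
  refine Finset.measurable_sum _ fun i _ => ?_
  split_ifs <;> fun_prop

/-- Rounding onto the grid `V_{p,m}` by flooring the partial sums of `v`; the coordinates then
telescope, so the rounded vector still sums to `1`. -/
noncomputable def gridRound (m : ℕ) (v : Fin p → ℝ) (j : Fin p) : ℝ :=
  ((⌊m * cumSum v (j + 1)⌋ - ⌊m * cumSum v j⌋ : ℤ) : ℝ) / m

lemma measurable_gridRound (m : ℕ) : Measurable (gridRound (p := p) m) := by
  refine measurable_pi_lambda _ fun j => ?_
  unfold gridRound
  have hj := measurable_cumSum (p := p) j
  have hj' := measurable_cumSum (p := p) (j + 1)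
  fun_prop

lemma gridRound_nonneg (m : ℕ) {v : Fin p → ℝ} (hv : 0 ≤ v) (j : Fin p) :
    0 ≤ gridRound m v j := by
  have hmono : ⌊(m : ℝ) * cumSum v j⌋ ≤ ⌊(m : ℝ) * cumSum v (j + 1)⌋ := by
    rw [cumSum_succ]
    gcongr
    exact le_add_of_nonneg_right (hv j)
  unfold gridRound
  have : (0 : ℝ) ≤ ((⌊(m : ℝ) * cumSum v (j + 1)⌋ - ⌊(m : ℝ) * cumSum v j⌋ : ℤ) : ℝ) := by
    exact_mod_cast sub_nonneg.2 hmono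
  positivity

lemma sum_gridRound {m : ℕ} (hm : 0 < m) {v : Fin p → ℝ} (hv : ∑ j, v j = 1) :
    ∑ j, gridRound m v j = 1 := by
  have hm' : (m : ℝ) ≠ 0 := by positivity
  simp only [gridRound, ← sum_div, Int.cast_sub]
  rw [Fin.sum_univ_eq_sum_range
      (fun k => (⌊(m : ℝ) * cumSum v (k + 1)⌋ : ℝ) - ⌊(m : ℝ) * cumSum v k⌋),
    sum_range_sub (fun k => (⌊(m : ℝ) * cumSum v k⌋ : ℝ)), cumSum_self, hv, cumSum_zero]
  simp [hm']

lemma gridRound_mem_simplex {m : ℕ} (hm : 0 < m) {v : Fin p → ℝ} (hv : v ∈ simplex p) :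
    gridRound m v ∈ simplex p :=
  mem_simplex_of_nonneg (gridRound_nonneg m fun j => (hv.1 j).1) (sum_gridRound hm hv.2)

lemma natCast_mul_gridRound {m : ℕ} (hm : 0 < m) (v : Fin p → ℝ) (j : Fin p) :
    (m : ℝ) * gridRound m v j = (⌊m * cumSum v (j + 1)⌋ - ⌊m * cumSum v j⌋ : ℤ) := by
  have : (m : ℝ) ≠ 0 := by positivity
  rw [gridRound, mul_div_cancel₀ _ this]

lemma abs_gridRound_sub_le {m : ℕ} (hm : 0 < m) (v : Fin p → ℝ) (j : Fin p) :
    |gridRound m v j - v j| ≤ 1 / m := by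
  have hm' : (0 : ℝ) < m := by positivity
  have key : |(m : ℝ) * gridRound m v j - m * v j| ≤ 1 := by
    rw [natCast_mul_gridRound hm, eq_sub_of_add_eq' (cumSum_succ v j).symm, mul_sub]
    push_cast
    refine abs_le.2 ⟨?_, ?_⟩ <;>
      linarith [Int.floor_le ((m : ℝ) * cumSum v (j + 1)), Int.floor_le ((m : ℝ) * cumSum v j),
        Int.lt_floor_add_one ((m : ℝ) * cumSum v (j + 1)),
        Int.lt_floor_add_one ((m : ℝ) * cumSum v j)]
  rw [← mul_sub, abs_mul, abs_of_pos hm'] at key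
  rw [le_div_iff₀ hm']
  linarith

variable {m : ℕ}

/-- The grid `V_{p,m}`. -/
def gridSimplex (p m : ℕ) : Set (Fin p → ℝ) :=
  {v | v ∈ simplex p ∧ ∀ j, ∃ k : ℤ, (m : ℝ) * v j = k}

lemma gridRound_mem_gridSimplex (hm : 0 < m) {v : Fin p → ℝ} (hv : v ∈ simplex p) :
    gridRound m v ∈ gridSimplex p m :=
  ⟨gridRound_mem_simplex hm hv, fun j => ⟨_, natCast_mul_gridRound hm v j⟩⟩

lemma single_mem_gridSimplex (j : Fin p) : Pi.single j 1 ∈ gridSimplex p m := by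
  refine ⟨mem_simplex_of_nonneg (Pi.single_nonneg.2 zero_le_one) (by simp), fun i => ?_⟩
  by_cases h : i = j
  · exact ⟨m, by simp [h]⟩
  · exact ⟨0, by simp [h]⟩

lemma measurableSet_gridSimplex (hm : 0 < m) : MeasurableSet (gridSimplex p m) := by
  refine ((Set.countable_range fun k : Fin p → ℤ => fun j => (k j : ℝ) / m).mono ?_).measurableSet
  rintro v ⟨-, hv⟩
  choose k hk using hv
  refine ⟨k, funext fun j => ?_⟩
  simp only [← hk]
  exact mul_div_cancel_left₀ _ (by positivity)

end GridRound

section PickandsDefect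

variable {p : ℕ}

/-- Against a spectral measure `G` this integrates to `1 - A_G(w)`
(`IsSpectralMeasure.pickandsFn_eq`). -/
noncomputable def pickandsDefect (w v : Fin p → ℝ) : ℝ :=
  ∑ j, v j * w j - ⨆ j, v j * w j

lemma measurable_iSup_mul (w : Fin p → ℝ) : Measurable fun v : Fin p → ℝ => ⨆ j, v j * w j :=
  Measurable.iSup fun j => by fun_prop

lemma measurable_pickandsDefect (w : Fin p → ℝ) : Measurable (pickandsDefect w) := by
  unfold pickandsDefect
  have hsup := measurable_iSup_mul w
  fun_prop

lemma pickandsDefect_nonneg {v w : Fin p → ℝ} (hv : 0 ≤ v) (hw : 0 ≤ w) :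
    0 ≤ pickandsDefect w v :=
  sub_nonneg.2 (iSup_le_sum_of_nonneg fun j => mul_nonneg (hv j) (hw j))

lemma pickandsDefect_le (hp : 0 < p) (v w : Fin p → ℝ) :
    pickandsDefect w v ≤ (1 - 1 / p) * ∑ j, v j * w j := by
  have : Nonempty (Fin p) := Fin.pos_iff_nonempty.1 hp
  have h := sum_le_card_mul_iSup fun j => v j * w j
  rw [Fintype.card_fin] at h
  have hp' : (0 : ℝ) < p := by exact_mod_cast hp
  rw [pickandsDefect, sub_mul, one_mul, one_div_mul_eq_div, sub_le_sub_iff_left, div_le_iff₀ hp',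
    mul_comm]
  exact h

lemma abs_pickandsDefect_le_one {v w : Fin p → ℝ} (hv : v ∈ simplex p) (hw : w ∈ simplex p) :
    |pickandsDefect w v| ≤ 1 := by
  have h0 := pickandsDefect_nonneg (fun j => (hv.1 j).1) (fun j => (hw.1 j).1)
  have hsup : 0 ≤ ⨆ j, v j * w j := Real.iSup_nonneg fun j => mul_nonneg (hv.1 j).1 (hw.1 j).1
  rw [abs_of_nonneg h0, pickandsDefect]
  linarith [sum_mul_le_one hv hw]

lemma abs_iSup_mul_le_one {v w : Fin p → ℝ} (hv : v ∈ simplex p) (hw : w ∈ simplex p) :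
    |⨆ j, v j * w j| ≤ 1 := by
  rw [abs_of_nonneg (Real.iSup_nonneg fun j => mul_nonneg (hv.1 j).1 (hw.1 j).1)]
  exact (iSup_le_sum_of_nonneg fun j => mul_nonneg (hv.1 j).1 (hw.1 j).1).trans
    (sum_mul_le_one hv hw)

lemma abs_pickandsDefect_sub_le (hp : 0 < p) {w : Fin p → ℝ} (hw : 0 ≤ w) (u v : Fin p → ℝ) :
    |pickandsDefect w u - pickandsDefect w v| ≤ ∑ j, |u j - v j| * w j := by
  have : Nonempty (Fin p) := Fin.pos_iff_nonempty.1 hp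
  convert abs_sum_sub_iSup_sub_sum_sub_iSup_le (fun j => u j * w j) (fun j => v j * w j) using 2
  · rfl
  rw [← sub_mul, abs_mul, abs_of_nonneg (hw _)]

lemma pickandsDefect_single {w : Fin p → ℝ} (hw : 0 ≤ w) (j : Fin p) :
    pickandsDefect w (Pi.single j 1) = 0 := by
  refine le_antisymm ?_ (pickandsDefect_nonneg (Pi.single_nonneg.2 zero_le_one) hw)
  have hsum : ∑ i, (Pi.single j 1 : Fin p → ℝ) i * w i = w j := by simp [Pi.single_apply]
  rw [pickandsDefect, hsum, sub_nonpos]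
  simpa using le_ciSup (Set.finite_range fun i => (Pi.single j 1 : Fin p → ℝ) i * w i).bddAbove j

lemma abs_pickandsDefect_gridRound_sub_le {m : ℕ} (hm : 0 < m) {w : Fin p → ℝ}
    (hw : w ∈ simplex p) (v : Fin p → ℝ) :
    |pickandsDefect w (gridRound m v) - pickandsDefect w v| ≤ 1 / m := by
  have hw0 : 0 ≤ w := fun j => (hw.1 j).1
  calc _ ≤ ∑ j, |gridRound m v j - v j| * w j :=
        abs_pickandsDefect_sub_le (pos_of_mem_simplex hw) hw0 _ _
    _ ≤ ∑ j, 1 / m * w j :=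
        sum_le_sum fun j _ => mul_le_mul_of_nonneg_right (abs_gridRound_sub_le hm v j) (hw0 j)
    _ = 1 / m := by rw [← mul_sum, hw.2, mul_one]

end PickandsDefect

section SmulMapAddDirac

variable {α β ι : Type*} [MeasurableSpace α] [MeasurableSpace β] [Fintype ι] {μ : Measure α}
  {T : α → β}

lemma ae_smul_map_add_sum_smul_dirac {P : β → Prop} (hP : MeasurableSet {y | P y})
    (hT : Measurable T) (hμ : ∀ᵐ a ∂μ, P (T a)) (c : NNReal) (b : ι → NNReal) {x : ι → β}
    (hx : ∀ i, P (x i)) :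
    ∀ᵐ y ∂(c • μ.map T + ∑ i, b i • Measure.dirac (x i)), P y := by
  rw [ae_add_measure_iff, ae_finsetSum_measure_iff]
  refine ⟨Measure.ae_smul_measure ((ae_map_iff hT.aemeasurable hP).2 hμ) c,
    fun i _ => Measure.ae_smul_measure ?_ _⟩
  exact (ae_dirac_iff hP).2 (hx i)

lemma integral_smul_map_add_sum_smul_dirac [MeasurableSingletonClass β] (hT : Measurable T)
    {c : ℝ} (hc : 0 ≤ c) {b : ι → ℝ} (hb : 0 ≤ b) (x : ι → β) {f : β → ℝ} (hf : Measurable f)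
    (hfT : Integrable (f ∘ T) μ) :
    ∫ y, f y ∂(c.toNNReal • μ.map T + ∑ i, (b i).toNNReal • Measure.dirac (x i)) =
      c * ∫ a, f (T a) ∂μ + ∑ i, b i * f (x i) := by
  have hmap : Integrable f (μ.map T) :=
    (integrable_map_measure hf.aestronglyMeasurable hT.aemeasurable).2 hfT
  have hdirac (i : ι) : Integrable f ((b i).toNNReal • Measure.dirac (x i)) :=
    (integrable_dirac (by simp)).smul_measure_nnreal
  rw [integral_add_measure hmap.smul_measure_nnreal
      (integrable_finsetSum_measure.2 fun i _ => hdirac i),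
    integral_finsetSum_measure fun i _ => hdirac i, integral_smul_nnreal_measure,
    integral_map hT.aemeasurable hf.aestronglyMeasurable]
  simp only [integral_smul_nnreal_measure, integral_dirac, NNReal.smul_def,
    Real.coe_toNNReal _ hc, Real.coe_toNNReal _ (hb _), smul_eq_mul]

end SmulMapAddDirac

/-- A spectral measure on the simplex, except for finiteness, which is kept as an instance
argument. -/
structure IsSpectralMeasure {p : ℕ} (G : Measure (Fin p → ℝ)) : Prop where
  ae_mem_simplex : ∀ᵐ v ∂G, v ∈ simplex p
  integral_apply : ∀ j, ∫ v, v j ∂G = 1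

namespace IsSpectralMeasure

variable {p : ℕ} {G : Measure (Fin p → ℝ)} (hG : IsSpectralMeasure G)
include hG

lemma integral_pickandsDefect_nonneg {w : Fin p → ℝ} (hw : w ∈ simplex p) :
    0 ≤ ∫ v, pickandsDefect w v ∂G :=
  integral_nonneg_of_ae <| hG.ae_mem_simplex.mono fun _ hv =>
    pickandsDefect_nonneg (fun j => (hv.1 j).1) (fun j => (hw.1 j).1)

variable [IsFiniteMeasure G]

lemma integrable {f : (Fin p → ℝ) → ℝ} {C : ℝ} (hf : Measurable f)
    (hC : ∀ v ∈ simplex p, |f v| ≤ C) : Integrable f G :=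
  .of_bound hf.aestronglyMeasurable C (hG.ae_mem_simplex.mono hC)

lemma integrable_apply (j : Fin p) : Integrable (fun v => v j) G :=
  hG.integrable (measurable_pi_apply j) fun _ hv => abs_le_one_of_mem_simplex hv j

lemma measureReal_univ : G.real Set.univ = p := by
  calc G.real Set.univ = ∫ _, (1 : ℝ) ∂G := by simp
    _ = ∫ v, ∑ j, v j ∂G := integral_congr_ae (hG.ae_mem_simplex.mono fun _ hv => hv.2.symm)
    _ = p := by simp [integral_finsetSum _ fun j _ => hG.integrable_apply j, hG.integral_apply]

lemma abs_integral_le {f : (Fin p → ℝ) → ℝ} {C : ℝ} (hC : ∀ v ∈ simplex p, |f v| ≤ C) :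
    |∫ v, f v ∂G| ≤ C * p :=
  hG.measureReal_univ ▸ norm_integral_le_of_norm_le_const (f := f) (hG.ae_mem_simplex.mono hC)

lemma integral_sum_mul (w : Fin p → ℝ) : ∫ v, ∑ j, v j * w j ∂G = ∑ j, w j := by
  simp [integral_finsetSum _ fun j _ => (hG.integrable_apply j).mul_const (w j),
    integral_mul_const, hG.integral_apply]

lemma pickandsFn_eq {w : Fin p → ℝ} (hw : w ∈ simplex p) :
    pickandsFn G w = 1 - ∫ v, pickandsDefect w v ∂G := by
  have hsup : Integrable (fun v => ⨆ j, v j * w j) G :=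
    hG.integrable (measurable_iSup_mul w) fun v hv => abs_iSup_mul_le_one hv hw
  simp only [pickandsFn, pickandsDefect]
  rw [integral_sub (integrable_finsetSum _ fun j _ =>
    (hG.integrable_apply j).mul_const (w j)) hsup, hG.integral_sum_mul, hw.2, sub_sub_cancel]

lemma integral_pickandsDefect_le {w : Fin p → ℝ} (hw : w ∈ simplex p) :
    ∫ v, pickandsDefect w v ∂G ≤ 1 - 1 / p := by
  calc ∫ v, pickandsDefect w v ∂G ≤ ∫ v, (1 - 1 / p) * ∑ j, v j * w j ∂G :=
        integral_mono (hG.integrable (measurable_pickandsDefect w)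
          fun v hv => abs_pickandsDefect_le_one hv hw)
          ((integrable_finsetSum _ fun j _ => (hG.integrable_apply j).mul_const (w j)).const_mul _)
          (pickandsDefect_le (pos_of_mem_simplex hw) · w)
    _ = 1 - 1 / p := by rw [integral_const_mul, hG.integral_sum_mul, hw.2, mul_one]

end IsSpectralMeasure

section Discretize

variable {p m : ℕ} {H : Measure (Fin p → ℝ)}

noncomputable def roundingWeight (p m : ℕ) : ℝ := m / (m + p)

lemma roundingWeight_nonneg : 0 ≤ roundingWeight p m := by
  unfold roundingWeight
  positivity

lemma one_sub_roundingWeight (hm : 0 < m) : 1 - roundingWeight p m = p / (m + p) := by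
  have hm' : (0 : ℝ) < m := by exact_mod_cast hm
  unfold roundingWeight
  field_simp
  ring

lemma roundingWeight_mul_one_add (hm : 0 < m) : roundingWeight p m * (1 + 1 / m * p) = 1 := by
  have hm' : (0 : ℝ) < m := by exact_mod_cast hm
  unfold roundingWeight
  field_simp

noncomputable def vertexWeight (m : ℕ) (H : Measure (Fin p → ℝ)) (j : Fin p) : ℝ :=
  1 - roundingWeight p m * ∫ v, gridRound m v j ∂H

/-- `H_m`: the push-forward of `H` under `gridRound m`, scaled by `m / (m + p)` so that vertex
masses with nonnegative weights can restore the unit moments. -/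
noncomputable def discretize (m : ℕ) (H : Measure (Fin p → ℝ)) : Measure (Fin p → ℝ) :=
  (roundingWeight p m).toNNReal • H.map (gridRound m) +
    ∑ j, (vertexWeight m H j).toNNReal • Measure.dirac (Pi.single j 1)

instance [IsFiniteMeasure H] : IsFiniteMeasure (discretize m H) := by
  unfold discretize
  infer_instance

lemma ae_mem_gridSimplex_discretize (hm : 0 < m) (hH : ∀ᵐ v ∂H, v ∈ simplex p) :
    ∀ᵐ v ∂discretize m H, v ∈ gridSimplex p m :=
  ae_smul_map_add_sum_smul_dirac (measurableSet_gridSimplex hm) (measurable_gridRound m)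
    (hH.mono fun _ hv => gridRound_mem_gridSimplex hm hv) _ _ single_mem_gridSimplex

end Discretize

namespace IsSpectralMeasure

variable {p m : ℕ} {H : Measure (Fin p → ℝ)} [IsFiniteMeasure H] (hH : IsSpectralMeasure H)
include hH

lemma integrable_comp_gridRound (hm : 0 < m) {f : (Fin p → ℝ) → ℝ} {C : ℝ} (hf : Measurable f)
    (hC : ∀ v ∈ simplex p, |f v| ≤ C) : Integrable (fun v => f (gridRound m v)) H :=
  hH.integrable (hf.comp (measurable_gridRound m)) fun _ hv => hC _ (gridRound_mem_simplex hm hv)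

lemma integral_gridRound_apply_le (hm : 0 < m) (j : Fin p) :
    ∫ v, gridRound m v j ∂H ≤ 1 + 1 / m * p := by
  have hround := hH.abs_integral_le (f := fun v => gridRound m v j - v j)
    fun v _ => abs_gridRound_sub_le hm v j
  rw [integral_sub (hH.integrable_comp_gridRound hm (measurable_pi_apply j)
    fun _ hv => abs_le_one_of_mem_simplex hv j) (hH.integrable_apply j),
    hH.integral_apply] at hround
  linarith [(abs_le.1 hround).2]

lemma vertexWeight_nonneg (hm : 0 < m) (j : Fin p) : 0 ≤ vertexWeight m H j := by
  rw [vertexWeight, sub_nonneg, ← roundingWeight_mul_one_add (p := p) hm]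
  exact mul_le_mul_of_nonneg_left (hH.integral_gridRound_apply_le hm j) roundingWeight_nonneg

lemma integral_discretize (hm : 0 < m) {f : (Fin p → ℝ) → ℝ} {C : ℝ} (hf : Measurable f)
    (hC : ∀ v ∈ simplex p, |f v| ≤ C) :
    ∫ v, f v ∂discretize m H = roundingWeight p m * ∫ v, f (gridRound m v) ∂H +
      ∑ j, vertexWeight m H j * f (Pi.single j 1) :=
  integral_smul_map_add_sum_smul_dirac (measurable_gridRound m) roundingWeight_nonneg
    (hH.vertexWeight_nonneg hm) _ hf (hH.integrable_comp_gridRound hm hf hC)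

lemma discretize (hm : 0 < m) : IsSpectralMeasure (_root_.discretize m H) where
  ae_mem_simplex := (ae_mem_gridSimplex_discretize hm hH.ae_mem_simplex).mono fun _ hv => hv.1
  integral_apply j := by
    rw [hH.integral_discretize hm (measurable_pi_apply j)
      fun _ hv => abs_le_one_of_mem_simplex hv j]
    simp [vertexWeight, Pi.single_apply]

lemma integral_pickandsDefect_discretize (hm : 0 < m) {w : Fin p → ℝ} (hw : w ∈ simplex p) :
    ∫ v, pickandsDefect w v ∂_root_.discretize m H =
      roundingWeight p m * ∫ v, pickandsDefect w (gridRound m v) ∂H := by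
  simp [hH.integral_discretize hm (measurable_pickandsDefect w)
    (fun _ hv => abs_pickandsDefect_le_one hv hw), pickandsDefect_single fun j => (hw.1 j).1]

lemma abs_integral_pickandsDefect_sub_le (hm : 0 < m) {w : Fin p → ℝ} (hw : w ∈ simplex p) :
    |∫ v, pickandsDefect w (gridRound m v) ∂H - ∫ v, pickandsDefect w v ∂H| ≤ 1 / m * p := by
  have hD := measurable_pickandsDefect w
  have hDC : ∀ v ∈ simplex p, |pickandsDefect w v| ≤ 1 := fun _ hv =>
    abs_pickandsDefect_le_one hv hw
  rw [← integral_sub (hH.integrable_comp_gridRound hm hD hDC) (hH.integrable hD hDC)]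
  exact hH.abs_integral_le fun v _ => abs_pickandsDefect_gridRound_sub_le hm hw v

/-- With `D = pickandsDefect w` and `c = m / (m + p)`,
`A_m(w) - A(w) = c (∫ D - ∫ D ∘ gridRound) + (1 - c) ∫ D`. -/
lemma abs_pickandsFn_discretize_sub_le (hm : 0 < m) {w : Fin p → ℝ} (hw : w ∈ simplex p) :
    |pickandsFn (_root_.discretize m H) w - pickandsFn H w| ≤ (2 * p - 1) / (m + p) := by
  have hp : (0 : ℝ) < p := by exact_mod_cast pos_of_mem_simplex hw
  have hround := hH.abs_integral_pickandsDefect_sub_le hm hw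
  have h0 := hH.integral_pickandsDefect_nonneg hw
  have h1 := hH.integral_pickandsDefect_le hw
  have hc0 : 0 ≤ roundingWeight p m := roundingWeight_nonneg
  have hc1 : 0 ≤ 1 - roundingWeight p m := one_sub_roundingWeight hm ▸ by positivity
  rw [(hH.discretize hm).pickandsFn_eq hw, hH.pickandsFn_eq hw,
    hH.integral_pickandsDefect_discretize hm hw, abs_sub_comm]
  calc _ = |roundingWeight p m * (∫ v, pickandsDefect w (gridRound m v) ∂H -
          ∫ v, pickandsDefect w v ∂H) - (1 - roundingWeight p m) * ∫ v, pickandsDefect w v ∂H| := by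
        ring_nf
    _ ≤ roundingWeight p m * (1 / m * p) + (1 - roundingWeight p m) * (1 - 1 / p) := by
        refine (abs_sub _ _).trans (add_le_add ?_ ?_)
        · rw [abs_mul, abs_of_nonneg hc0]
          exact mul_le_mul_of_nonneg_left hround hc0
        · rw [abs_of_nonneg (mul_nonneg hc1 h0)]
          exact mul_le_mul_of_nonneg_left h1 hc1
    _ = (2 * p - 1) / (m + p) := by
        rw [one_sub_roundingWeight hm]
        unfold roundingWeight
        field_simp
        ring

end IsSpectralMeasure

theorem spectral_measure_discretization_general {p : ℕ} (H : Measure (Fin p → ℝ))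
    [IsFiniteMeasure H] (hsupp : ∀ᵐ v ∂H, v ∈ simplex p)
    (hmom : ∀ j, ∫ v, v j ∂H = 1) :
    ∀ m : ℕ, 1 ≤ m → ∃ Hm : Measure (Fin p → ℝ),
      IsFiniteMeasure Hm ∧
      Hm {v | ¬ (v ∈ simplex p ∧ ∀ j, ∃ k : ℤ, (m : ℝ) * v j = (k : ℝ))} = 0 ∧
      (∀ j, ∫ v, v j ∂Hm = 1) ∧
      ∀ w ∈ simplex p, |pickandsFn Hm w - pickandsFn H w| ≤ (p : ℝ) ^ 2 / m := by
  intro m hm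
  have hH : IsSpectralMeasure H := ⟨hsupp, hmom⟩
  refine ⟨discretize m H, inferInstance, ae_iff.1 (ae_mem_gridSimplex_discretize hm hsupp),
    (hH.discretize hm).integral_apply,
    fun w hw => (hH.abs_pickandsFn_discretize_sub_le hm hw).trans ?_⟩
  calc (2 * p - 1 : ℝ) / (m + p) ≤ p ^ 2 / (m + p) := by
        gcongr
        nlinarith [sq_nonneg ((p : ℝ) - 1)]
    _ ≤ p ^ 2 / m := by gcongr; exact le_add_of_nonneg_right p.cast_nonneg

/-- Any spectral measure `H` can be approximated by a discrete spectral measure `H_m`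
supported on the grid `V_{p,m}` so that the Pickands dependence functions are uniformly
within `p²/m` of each other. -/
theorem spectral_measure_discretization {p : ℕ} (hp : 0 < p) (H : Measure (Fin p → ℝ))
    [IsFiniteMeasure H] (hsupp : ∀ᵐ v ∂H, v ∈ simplex p)
    (hmom : ∀ j, ∫ v, v j ∂H = 1) :
    ∀ m : ℕ, 1 ≤ m → ∃ Hm : Measure (Fin p → ℝ),
      IsFiniteMeasure Hm ∧
      Hm {v | ¬ (v ∈ simplex p ∧ ∀ j, ∃ k : ℤ, (m : ℝ) * v j = (k : ℝ))} = 0 ∧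
      (∀ j, ∫ v, v j ∂Hm = 1) ∧
      ∀ w ∈ simplex p, |pickandsFn Hm w - pickandsFn H w| ≤ (p : ℝ) ^ 2 / m :=
  spectral_measure_discretization_general H hsupp hmom
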